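/- arXiv:2503.22867 — 2 statements merged into one kernel-verified Lean document; each statement's English description precedes it below -/
import Mathlib

section
/- Under Assumption 1 (d_θ(s) > 0 for all s ∈ S and all θ ∈ X), a policy θ* ∈ X of a finite Markov game under direct policy parameterization is a Nash equilibrium if and only if it is a first-order stationary policy. -/
open scoped BigOperators

/-! Common framework for finite Markov games under direct policy
parameterization.  Agents are indexed by `Fin N`, the state space `S` and the
action spaces `A i` are finite.  A policy profile is `θ : ∀ i, S → A i → ℝ`,
feasible when each `θ i s` lies in the probability simplex. -/

section MGDefs

variable {N : ℕ} {S : Type} {A : Fin N → Type}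
variable [Fintype S] [∀ i, Fintype (A i)]

/-- Joint policy `π_θ(a|s) = ∏ i, θ_i(a_i|s)` induced by the per-agent
directly parameterized policies. -/
def jointPi (θ : ∀ i, S → A i → ℝ) : S → (∀ i, A i) → ℝ :=
  fun s a => ∏ i, θ i s (a i)

/-- Distribution of the state at time `t` under transition kernel `P`,
policy `π` and initial distribution `ρ`. -/
def stateDist {σ α : Type} [Fintype σ] [Fintype α] (P : σ → α → σ → ℝ)
    (π : σ → α → ℝ) (ρ : σ → ℝ) : ℕ → σ → ℝ
  | 0 => ρ
  | t + 1 => fun s' => ∑ s, ∑ a, stateDist P π ρ t s * π s a * P s a s'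

/-- Expected discounted sum `E[∑ₜ γ^t f(s_t, a_t)]` of a state-action
function `f`, under kernel `P`, policy `π`, and initial distribution `ρ`. -/
noncomputable def expDisc {σ α : Type} [Fintype σ] [Fintype α] (γ : ℝ)
    (P : σ → α → σ → ℝ) (π : σ → α → ℝ) (ρ : σ → ℝ) (f : σ → α → ℝ) : ℝ :=
  ∑' t : ℕ, γ ^ t * ∑ s, ∑ a, stateDist P π ρ t s * π s a * f s a

/-- Dirac (point-mass) distribution at `s`. -/
def dirac {σ : Type} [DecidableEq σ] (s : σ) : σ → ℝ :=
  fun s' => if s' = s then 1 else 0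

/-- Value function `V^θ(s) = E[∑ₜ γ^t f(s_t,a_t) | π_θ, s_0 = s]`. -/
noncomputable def valueV [DecidableEq S] (γ : ℝ) (P : S → (∀ i, A i) → S → ℝ)
    (θ : ∀ i, S → A i → ℝ) (f : S → (∀ i, A i) → ℝ) (s : S) : ℝ :=
  expDisc γ P (jointPi θ) (dirac s) f

/-- Total objective `J(θ) = E_{s₀ ∼ ρ}[∑ₜ γ^t f(s_t,a_t) | π_θ]`. -/
noncomputable def Jtot (γ : ℝ) (P : S → (∀ i, A i) → S → ℝ) (ρ : S → ℝ)
    (θ : ∀ i, S → A i → ℝ) (f : S → (∀ i, A i) → ℝ) : ℝ :=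
  expDisc γ P (jointPi θ) ρ f

/-- The feasible set `X = X_1 × ⋯ × X_N`, `X_i = Δ(A_i)^S`. -/
def feasible (θ : ∀ i, S → A i → ℝ) : Prop :=
  ∀ i, ∀ s, θ i s ∈ stdSimplex ℝ (A i)

/-- Discounted state-visitation measure
`d_θ(s) = (1-γ) E_{s₀∼ρ} ∑ₜ γ^t Pr^θ(s_t = s | s₀)`. -/
noncomputable def visit (γ : ℝ) (P : S → (∀ i, A i) → S → ℝ)
    (θ : ∀ i, S → A i → ℝ) (ρ : S → ℝ) (s : S) : ℝ :=
  (1 - γ) * ∑' t : ℕ, γ ^ t * stateDist P (jointPi θ) ρ t s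

end MGDefs


/-! The performance-difference lemma expresses the gain of a unilateral deviation `x` of
agent `i` as `J_i(x, θ_{-i}) - J_i(θ) = ∑ s, d^x(s) ∑ b, (x(s, b) - θ_i(s, b)) Q_i^θ(s, b)`, where `d^x` is
the discounted occupancy of the deviated policy and `Q_i^θ` is agent `i`'s action value at `θ`.
As `d^x` depends continuously on `x`, this identity also shows that the gradient of
`x ↦ J_i(x, θ_{-i})` at `θ_i` is `h ↦ ∑ s, d^θ(s) ∑ b, h(s, b) Q_i^θ(s, b)`.

A Nash equilibrium maximizes `x ↦ J_i(x, θ_{-i})` over the convex set `X_i`, so it is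
first-order stationary. Conversely, since `d^θ > 0` and `X_i` is a product over states,
stationarity gives `∑ b, (x(s, b) - θ_i(s, b)) Q_i^θ(s, b) ≤ 0` at every state `s`, and the
performance difference is then nonpositive because `d^x ≥ 0`. -/

open Topology

lemma sum_abs_of_mem_stdSimplex {ι : Type*} [Fintype ι] {p : ι → ℝ}
    (hp : p ∈ stdSimplex ℝ ι) : ∑ i, |p i| = 1 := by
  simp_rw [abs_of_nonneg (hp.1 _)]
  exact hp.2

section MarkovDecision

variable {σ α : Type} [Fintype σ] [Fintype α] {P : σ → α → σ → ℝ} {π : σ → α → ℝ}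
  {γ M : ℝ}

lemma sum_abs_stateDist_le (hP : ∀ s a, P s a ∈ stdSimplex ℝ σ) (hM0 : 0 ≤ M)
    (hM : ∀ s, ∑ a, |π s a| ≤ M) (ρ : σ → ℝ) (t : ℕ) :
    ∑ s, |stateDist P π ρ t s| ≤ (∑ s, |ρ s|) * M ^ t := by
  induction t with
  | zero => simp [stateDist]
  | succ t ih =>
    calc ∑ s', |stateDist P π ρ (t + 1) s'|
        ≤ ∑ s', ∑ s, ∑ a, |stateDist P π ρ t s| * |π s a| * P s a s' := by
          refine Finset.sum_le_sum fun s' _ => (Finset.abs_sum_le_sum_abs _ _).trans <|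
            Finset.sum_le_sum fun s _ => (Finset.abs_sum_le_sum_abs _ _).trans_eq <|
              Finset.sum_congr rfl fun a _ => ?_
          rw [abs_mul, abs_mul, abs_of_nonneg ((hP s a).1 s')]
      _ = ∑ s, |stateDist P π ρ t s| * ∑ a, |π s a| := by
          rw [Finset.sum_comm]
          refine Finset.sum_congr rfl fun s _ => ?_
          rw [Finset.sum_comm, Finset.mul_sum]
          refine Finset.sum_congr rfl fun a _ => ?_
          rw [← Finset.mul_sum, (hP s a).2, mul_one]
      _ ≤ ∑ s, |stateDist P π ρ t s| * M :=
          Finset.sum_le_sum fun s _ => mul_le_mul_of_nonneg_left (hM s) (abs_nonneg _)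
      _ ≤ (∑ s, |ρ s|) * M ^ (t + 1) := by
          rw [← Finset.sum_mul, pow_succ, ← mul_assoc]
          exact mul_le_mul_of_nonneg_right ih hM0

lemma abs_discounted_stateDist_le (hP : ∀ s a, P s a ∈ stdSimplex ℝ σ) (hγ : 0 ≤ γ)
    (hM0 : 0 ≤ M) (hM : ∀ s, ∑ a, |π s a| ≤ M) (ρ : σ → ℝ) (t : ℕ) (s : σ) :
    |γ ^ t * stateDist P π ρ t s| ≤ (∑ s, |ρ s|) * (γ * M) ^ t := by
  rw [abs_mul, abs_of_nonneg (pow_nonneg hγ t), mul_pow, mul_left_comm]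
  refine mul_le_mul_of_nonneg_left ?_ (pow_nonneg hγ t)
  exact (Finset.single_le_sum (fun s _ => abs_nonneg (stateDist P π ρ t s))
    (Finset.mem_univ s)).trans (sum_abs_stateDist_le hP hM0 hM ρ t)

lemma summable_discounted_stateDist (hP : ∀ s a, P s a ∈ stdSimplex ℝ σ) (hγ : 0 ≤ γ)
    (hM0 : 0 ≤ M) (hM : ∀ s, ∑ a, |π s a| ≤ M) (hγM : γ * M < 1) (ρ : σ → ℝ) (s : σ) :
    Summable fun t => γ ^ t * stateDist P π ρ t s :=
  Summable.of_norm_bounded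
    ((summable_geometric_of_lt_one (mul_nonneg hγ hM0) hγM).mul_left _)
    (abs_discounted_stateDist_le hP hγ hM0 hM ρ · s)

/-- Unnormalized: `visit γ P θ ρ s = (1 - γ) * occupancy γ P (jointPi θ) ρ s`. -/
noncomputable def occupancy (γ : ℝ) (P : σ → α → σ → ℝ) (π : σ → α → ℝ) (ρ : σ → ℝ)
    (s : σ) : ℝ :=
  ∑' t : ℕ, γ ^ t * stateDist P π ρ t s

lemma hasSum_discounted_sum_stateDist_mul (hP : ∀ s a, P s a ∈ stdSimplex ℝ σ) (hγ : 0 ≤ γ)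
    (hM0 : 0 ≤ M) (hM : ∀ s, ∑ a, |π s a| ≤ M) (hγM : γ * M < 1) (ρ g : σ → ℝ) :
    HasSum (fun t => γ ^ t * ∑ s, stateDist P π ρ t s * g s)
      (∑ s, occupancy γ P π ρ s * g s) := by
  simp_rw [Finset.mul_sum, ← mul_assoc]
  exact hasSum_sum fun s _ =>
    ((summable_discounted_stateDist hP hγ hM0 hM hγM ρ s).hasSum).mul_right (g s)

lemma expDisc_eq_sum_occupancy (hP : ∀ s a, P s a ∈ stdSimplex ℝ σ) (hγ : 0 ≤ γ)
    (hM0 : 0 ≤ M) (hM : ∀ s, ∑ a, |π s a| ≤ M) (hγM : γ * M < 1) (ρ : σ → ℝ)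
    (f : σ → α → ℝ) :
    expDisc γ P π ρ f = ∑ s, occupancy γ P π ρ s * ∑ a, π s a * f s a := by
  rw [← (hasSum_discounted_sum_stateDist_mul hP hγ hM0 hM hγM ρ _).tsum_eq, expDisc]
  simp only [Finset.mul_sum, mul_assoc]

lemma occupancy_eq_add_last_step (hP : ∀ s a, P s a ∈ stdSimplex ℝ σ) (hγ : 0 ≤ γ)
    (hM0 : 0 ≤ M) (hM : ∀ s, ∑ a, |π s a| ≤ M) (hγM : γ * M < 1) (ρ : σ → ℝ) (s' : σ) :
    occupancy γ P π ρ s' =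
      ρ s' + γ * ∑ s, occupancy γ P π ρ s * ∑ a, π s a * P s a s' := by
  rw [occupancy, (summable_discounted_stateDist hP hγ hM0 hM hγM ρ s').tsum_eq_zero_add,
    ← (hasSum_discounted_sum_stateDist_mul hP hγ hM0 hM hγM ρ _).tsum_eq, ← tsum_mul_left]
  simp only [stateDist, pow_zero, one_mul, pow_succ, Finset.mul_sum, mul_assoc, mul_left_comm γ]

lemma stateDist_succ_eq_stateDist_one (ρ : σ → ℝ) (t : ℕ) :
    stateDist P π ρ (t + 1) = stateDist P π (stateDist P π ρ 1) t := by
  induction t with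
  | zero => rfl
  | succ t ih => rw [stateDist, ih]; rfl

lemma occupancy_eq_add_first_step (hP : ∀ s a, P s a ∈ stdSimplex ℝ σ) (hγ : 0 ≤ γ)
    (hM0 : 0 ≤ M) (hM : ∀ s, ∑ a, |π s a| ≤ M) (hγM : γ * M < 1) (ρ : σ → ℝ) (s : σ) :
    occupancy γ P π ρ s = ρ s + γ * occupancy γ P π (stateDist P π ρ 1) s := by
  rw [occupancy, (summable_discounted_stateDist hP hγ hM0 hM hγM ρ s).tsum_eq_zero_add,
    occupancy, ← tsum_mul_left, pow_zero, one_mul]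
  congr 1
  exact tsum_congr fun t => by rw [stateDist_succ_eq_stateDist_one, pow_succ]; ring

variable [DecidableEq σ]

lemma stateDist_eq_sum_dirac (ρ : σ → ℝ) (t : ℕ) (s : σ) :
    stateDist P π ρ t s = ∑ s₀, ρ s₀ * stateDist P π (dirac s₀) t s := by
  induction t generalizing s with
  | zero => simp [stateDist, dirac]
  | succ t ih =>
    rw [stateDist, funext ih]
    simp only [stateDist, Finset.sum_mul, Finset.mul_sum, mul_assoc]
    exact (Finset.sum_congr rfl fun _ _ => Finset.sum_comm).trans Finset.sum_comm

lemma occupancy_eq_sum_dirac (hP : ∀ s a, P s a ∈ stdSimplex ℝ σ) (hγ : 0 ≤ γ)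
    (hM0 : 0 ≤ M) (hM : ∀ s, ∑ a, |π s a| ≤ M) (hγM : γ * M < 1) (ρ : σ → ℝ) (s : σ) :
    occupancy γ P π ρ s = ∑ s₀, ρ s₀ * occupancy γ P π (dirac s₀) s := by
  have hsum := fun s₀ =>
    (summable_discounted_stateDist hP hγ hM0 hM hγM (dirac s₀) s).mul_left (ρ s₀)
  simp only [occupancy, ← tsum_mul_left]
  rw [← Summable.tsum_finsetSum fun s₀ _ => hsum s₀]
  simp only [stateDist_eq_sum_dirac ρ _ s, Finset.mul_sum, mul_left_comm]

lemma expDisc_eq_sum_dirac (hP : ∀ s a, P s a ∈ stdSimplex ℝ σ) (hγ : 0 ≤ γ)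
    (hM0 : 0 ≤ M) (hM : ∀ s, ∑ a, |π s a| ≤ M) (hγM : γ * M < 1) (ρ : σ → ℝ)
    (f : σ → α → ℝ) :
    expDisc γ P π ρ f = ∑ s₀, ρ s₀ * expDisc γ P π (dirac s₀) f := by
  simp only [expDisc_eq_sum_occupancy hP hγ hM0 hM hγM,
    occupancy_eq_sum_dirac hP hγ hM0 hM hγM ρ, Finset.sum_mul, Finset.mul_sum, mul_assoc]
  exact (Finset.sum_congr rfl fun _ _ => Finset.sum_comm).trans Finset.sum_comm

noncomputable def qValue (γ : ℝ) (P : σ → α → σ → ℝ) (π : σ → α → ℝ) (f : σ → α → ℝ)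
    (s : σ) (a : α) : ℝ :=
  f s a + γ * ∑ s', P s a s' * expDisc γ P π (dirac s') f

lemma expDisc_dirac_eq_sum_qValue (hP : ∀ s a, P s a ∈ stdSimplex ℝ σ) (hγ : 0 ≤ γ)
    (hM0 : 0 ≤ M) (hM : ∀ s, ∑ a, |π s a| ≤ M) (hγM : γ * M < 1) (f : σ → α → ℝ) (s : σ) :
    expDisc γ P π (dirac s) f = ∑ a, π s a * qValue γ P π f s a := by
  have hstep : ∀ s', stateDist P π (dirac s) 1 s' = ∑ a, π s a * P s a s' := fun s' => by
    simp [stateDist, dirac]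
  have hnext : expDisc γ P π (stateDist P π (dirac s) 1) f
      = ∑ a, π s a * ∑ s', P s a s' * expDisc γ P π (dirac s') f := by
    rw [expDisc_eq_sum_dirac hP hγ hM0 hM hγM]
    simp only [hstep, Finset.sum_mul, Finset.mul_sum, mul_assoc]
    exact Finset.sum_comm
  rw [expDisc_eq_sum_occupancy hP hγ hM0 hM hγM]
  simp only [occupancy_eq_add_first_step hP hγ hM0 hM hγM (dirac s), add_mul,
    Finset.sum_add_distrib, mul_assoc, ← Finset.mul_sum]
  rw [← expDisc_eq_sum_occupancy hP hγ hM0 hM hγM, hnext]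
  simp [dirac, qValue, mul_add, Finset.sum_add_distrib, Finset.mul_sum, mul_left_comm]

end MarkovDecision

section PerformanceDifference

variable {σ α : Type} [Fintype σ] [Fintype α] [DecidableEq σ] {P : σ → α → σ → ℝ}
  {γ M : ℝ}

/-- The performance-difference lemma. -/
theorem expDisc_sub_expDisc_eq_sum_occupancy (hP : ∀ s a, P s a ∈ stdSimplex ℝ σ)
    (hγ : 0 ≤ γ) (hM0 : 0 ≤ M) (hγM : γ * M < 1) {π π' : σ → α → ℝ}
    (hM : ∀ s, ∑ a, |π s a| ≤ M) (hM' : ∀ s, ∑ a, |π' s a| ≤ M) (ρ : σ → ℝ)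
    (f : σ → α → ℝ) :
    expDisc γ P π' ρ f - expDisc γ P π ρ f =
      ∑ s, occupancy γ P π' ρ s * ∑ a, (π' s a - π s a) * qValue γ P π f s a := by
  have hlast : ∀ s', occupancy γ P π' ρ s' - ρ s' =
      γ * ∑ s, occupancy γ P π' ρ s * ∑ a, π' s a * P s a s' := fun s' => by
    rw [occupancy_eq_add_last_step hP hγ hM0 hM' hγM ρ s', add_sub_cancel_left]
  have hflow : ∑ s, occupancy γ P π' ρ s * ∑ a, π' s a * qValue γ P π f s a
      = expDisc γ P π' ρ f +
        ∑ s', (occupancy γ P π' ρ s' - ρ s') * expDisc γ P π (dirac s') f := by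
    simp only [hlast, expDisc_eq_sum_occupancy hP hγ hM0 hM' hγM ρ f, qValue, mul_add,
      Finset.sum_add_distrib, Finset.mul_sum, Finset.sum_mul, mul_assoc, mul_left_comm γ]
    exact congrArg _ ((Finset.sum_congr rfl fun _ _ => Finset.sum_comm).trans Finset.sum_comm)
  simp only [sub_mul, Finset.sum_sub_distrib, mul_sub, hflow,
    ← expDisc_dirac_eq_sum_qValue hP hγ hM0 hM hγM, expDisc_eq_sum_dirac hP hγ hM0 hM hγM ρ f]
  ring

end PerformanceDifference

section Continuity

variable {σ α : Type} {X : Type*} [Fintype σ] [Fintype α] [TopologicalSpace X] {P : σ → α → σ → ℝ}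
  {π : X → σ → α → ℝ} {γ M : ℝ}

lemma continuous_stateDist (hπ : ∀ s a, Continuous fun x => π x s a) (ρ : σ → ℝ) (t : ℕ)
    (s : σ) : Continuous fun x => stateDist P (π x) ρ t s := by
  induction t generalizing s with
  | zero => exact continuous_const
  | succ t ih =>
    exact continuous_finsetSum _ fun u _ => continuous_finsetSum _ fun a _ =>
      ((ih u).mul (hπ u a)).mul continuous_const

lemma continuousOn_occupancy (hP : ∀ s a, P s a ∈ stdSimplex ℝ σ) (hγ : 0 ≤ γ)
    (hM0 : 0 ≤ M) (hγM : γ * M < 1) (hπ : ∀ s a, Continuous fun x => π x s a) {U : Set X}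
    (hU : ∀ x ∈ U, ∀ s, ∑ a, |π x s a| ≤ M) (ρ : σ → ℝ) (s : σ) :
    ContinuousOn (fun x => occupancy γ P (π x) ρ s) U :=
  continuousOn_tsum
    (fun t => ((continuous_stateDist hπ ρ t s).const_mul (γ ^ t)).continuousOn)
    ((summable_geometric_of_lt_one (mul_nonneg hγ hM0) hγM).mul_left (∑ s, |ρ s|))
    fun t x hx => (Real.norm_eq_abs _).trans_le
      (abs_discounted_stateDist_le hP hγ hM0 (hU x hx) ρ t s)

end Continuity

section Calculus

variable {E F : Type*} [NormedAddCommGroup E] [NormedSpace ℝ E] [NormedAddCommGroup F]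
  [NormedSpace ℝ F]

theorem hasFDerivAt_of_eventually_sub_eq_apply {f : E → F} {Φ : E → E →L[ℝ] F} {x₀ : E}
    (hΦ : ContinuousAt Φ x₀) (hf : ∀ᶠ x in 𝓝 x₀, f x - f x₀ = Φ x (x - x₀)) :
    HasFDerivAt f (Φ x₀) x₀ := by
  refine .of_isLittleO <| Asymptotics.isLittleO_iff.2 fun ε hε => ?_
  filter_upwards [hf, Metric.eventually_nhds_iff_ball.2 (Metric.continuousAt_iff.1 hΦ ε hε)]
    with x hfx hΦx
  rw [hfx, ← sub_apply]
  exact (ContinuousLinearMap.le_opNorm _ _).trans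
    (mul_le_mul_of_nonneg_right (le_of_lt (by simpa [dist_eq_norm] using hΦx)) (norm_nonneg _))

theorem fderiv_apply_sub_nonpos_of_isMaxOn {f : E → ℝ} {K : Set E} (hK : Convex ℝ K)
    {x y : E} (hx : x ∈ K) (hy : y ∈ K) (hmax : IsMaxOn f K x) : fderiv ℝ f x (y - x) ≤ 0 := by
  by_cases hf : DifferentiableAt ℝ f x
  · exact hmax.localize.hasFDerivWithinAt_nonpos hf.hasFDerivAt.hasFDerivWithinAt
      (sub_mem_posTangentConeAt_of_segment_subset (hK.segment_subset hx hy))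
  · simp [fderiv_zero_of_not_differentiableAt hf]

end Calculus

section Pairing

variable {ι β : Type*} [Fintype ι] [Fintype β]

noncomputable def weightedPairing (w : ι → ℝ) (q : ι → β → ℝ) : (ι → β → ℝ) →L[ℝ] ℝ :=
  ∑ s, ∑ b, (w s * q s b) •
    ((ContinuousLinearMap.proj (R := ℝ) (φ := fun _ : β => ℝ) b).comp
      (ContinuousLinearMap.proj (R := ℝ) (φ := fun _ : ι => β → ℝ) s))

lemma weightedPairing_apply (w : ι → ℝ) (q : ι → β → ℝ) (h : ι → β → ℝ) :
    weightedPairing w q h = ∑ s, w s * ∑ b, h s b * q s b := by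
  simp [weightedPairing, Finset.mul_sum, mul_comm, mul_left_comm]

lemma continuousAt_weightedPairing {X : Type*} [TopologicalSpace X] {w : X → ι → ℝ} {x₀ : X}
    (hw : ∀ s, ContinuousAt (w · s) x₀) (q : ι → β → ℝ) :
    ContinuousAt (fun x => weightedPairing (w x) q) x₀ := by
  unfold weightedPairing
  fun_prop

end Pairing

theorem nonpos_of_forall_weighted_sum_nonpos {ι β : Type*} [Fintype ι] {K : ι → Set β}
    {w : ι → ℝ} (hw : ∀ s, 0 < w s) {F : ι → β → ℝ} {x₀ : ι → β} (hx₀ : ∀ s, x₀ s ∈ K s)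
    (hF : ∀ s, F s (x₀ s) = 0)
    (h : ∀ y : ι → β, (∀ s, y s ∈ K s) → ∑ s, w s * F s (y s) ≤ 0) {s : ι} {z : β}
    (hz : z ∈ K s) : F s z ≤ 0 := by
  classical
  have hy : ∀ s', Function.update x₀ s z s' ∈ K s' := fun s' => by
    rcases eq_or_ne s' s with rfl | hs
    · simpa using hz
    · simpa [Function.update_of_ne hs] using hx₀ s'
  have := h _ hy
  rw [Finset.sum_eq_single s (fun s' _ hs => by simp [Function.update_of_ne hs, hF])
    (by simp), Function.update_self] at this
  exact nonpos_of_mul_nonpos_right this (hw s)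

section Game

variable {N : ℕ} {S : Type} {A : Fin N → Type}

def othersPi (θ : ∀ i, S → A i → ℝ) (i : Fin N) (s : S) (a : ∀ j, A j) : ℝ :=
  ∏ j ∈ Finset.univ.erase i, θ j s (a j)

lemma jointPi_update (θ : ∀ i, S → A i → ℝ) (i : Fin N) (x : S → A i → ℝ) (s : S)
    (a : ∀ j, A j) : jointPi (Function.update θ i x) s a = x s (a i) * othersPi θ i s a := by
  rw [jointPi, othersPi, ← Finset.mul_prod_erase _ _ (Finset.mem_univ i), Function.update_self]
  exact congrArg _ (Finset.prod_congr rfl fun j hj =>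
    by rw [Function.update_of_ne (Finset.ne_of_mem_erase hj)])

variable [∀ i, Fintype (A i)]

open Classical in
/-- `marginalize θ i Q s b = 𝔼_{a_{-i} ∼ θ_{-i}(s)} Q(s, (b, a_{-i}))`. -/
noncomputable def marginalize (θ : ∀ i, S → A i → ℝ) (i : Fin N) (Q : S → (∀ j, A j) → ℝ)
    (s : S) (b : A i) : ℝ :=
  ∑ a with a i = b, othersPi θ i s a * Q s a

lemma feasible_update {θ : ∀ i, S → A i → ℝ} (hθ : feasible θ) (i : Fin N)
    {x : S → A i → ℝ} (hx : ∀ s, x s ∈ stdSimplex ℝ (A i)) :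
    feasible (Function.update θ i x) := by
  intro j s
  rcases eq_or_ne j i with rfl | hj
  · simpa using hx s
  · simpa [Function.update_of_ne hj] using hθ j s

lemma sum_abs_jointPi (θ : ∀ i, S → A i → ℝ) (s : S) :
    ∑ a, |jointPi θ s a| = ∏ j, ∑ y, |θ j s y| := by
  simp only [jointPi, Finset.abs_prod, Finset.prod_univ_sum, Fintype.piFinset_univ]

lemma sum_abs_jointPi_update {θ : ∀ i, S → A i → ℝ} (hθ : feasible θ) (i : Fin N)
    (x : S → A i → ℝ) (s : S) : ∑ a, |jointPi (Function.update θ i x) s a| = ∑ b, |x s b| := by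
  rw [sum_abs_jointPi, Finset.prod_eq_single i (fun j _ hj => ?_) (by simp)]
  · simp
  · simpa [Function.update_of_ne hj] using sum_abs_of_mem_stdSimplex (hθ j s)

lemma sum_abs_jointPi_of_feasible {θ : ∀ i, S → A i → ℝ} (hθ : feasible θ) (s : S) :
    ∑ a, |jointPi θ s a| = 1 := by
  rw [sum_abs_jointPi]
  exact Finset.prod_eq_one fun j _ => sum_abs_of_mem_stdSimplex (hθ j s)

lemma sum_jointPi_update_sub_mul (θ : ∀ i, S → A i → ℝ) (i : Fin N) (x : S → A i → ℝ)
    (Q : S → (∀ j, A j) → ℝ) (s : S) :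
    ∑ a, (jointPi (Function.update θ i x) s a - jointPi θ s a) * Q s a =
      ∑ b, (x s b - θ i s b) * marginalize θ i Q s b := by
  classical
  have hθ : jointPi θ = jointPi (Function.update θ i (θ i)) := by rw [Function.update_eq_self]
  simp only [hθ, jointPi_update, marginalize, Finset.mul_sum]
  rw [← Finset.sum_fiberwise Finset.univ (fun a => a i)]
  refine Finset.sum_congr rfl fun b _ => Finset.sum_congr rfl fun a ha => ?_
  rw [(Finset.mem_filter.1 ha).2]
  ring

variable [Fintype S] [DecidableEq S] {P : S → (∀ i, A i) → S → ℝ}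
  {γ M : ℝ} {θ : ∀ i, S → A i → ℝ}

noncomputable def agentQ (γ : ℝ) (P : S → (∀ i, A i) → S → ℝ) (θ : ∀ i, S → A i → ℝ)
    (f : S → (∀ i, A i) → ℝ) (i : Fin N) : S → A i → ℝ :=
  marginalize θ i (qValue γ P (jointPi θ) f)

theorem Jtot_update_sub_Jtot (hP : ∀ s a, P s a ∈ stdSimplex ℝ S) (hγ : 0 ≤ γ)
    (hM1 : 1 ≤ M) (hγM : γ * M < 1) (hθ : feasible θ) (i : Fin N) {x : S → A i → ℝ}
    (hx : ∀ s, ∑ b, |x s b| ≤ M) (ρ : S → ℝ) (f : S → (∀ i, A i) → ℝ) :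
    Jtot γ P ρ (Function.update θ i x) f - Jtot γ P ρ θ f =
      ∑ s, occupancy γ P (jointPi (Function.update θ i x)) ρ s *
        ∑ b, (x s b - θ i s b) * agentQ γ P θ f i s b := by
  rw [Jtot, Jtot, expDisc_sub_expDisc_eq_sum_occupancy hP hγ (by linarith) hγM
    (fun s => (sum_abs_jointPi_of_feasible hθ s).trans_le hM1)
    (fun s => (sum_abs_jointPi_update hθ i x s).trans_le (hx s))]
  simp only [sum_jointPi_update_sub_mul, agentQ]

theorem hasFDerivAt_Jtot_update (hP : ∀ s a, P s a ∈ stdSimplex ℝ S) (hγ : 0 ≤ γ)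
    (hγ1 : γ < 1) (hθ : feasible θ) (i : Fin N) (ρ : S → ℝ) (f : S → (∀ i, A i) → ℝ) :
    HasFDerivAt (fun x => Jtot γ P ρ (Function.update θ i x) f)
      (weightedPairing (occupancy γ P (jointPi θ) ρ) (agentQ γ P θ f i)) (θ i) := by
  obtain ⟨M, hM1, hγM⟩ : ∃ M, 1 < M ∧ γ * M < 1 :=
    ⟨2 / (1 + γ), by rw [one_lt_div (by linarith)]; linarith,
      by rw [← mul_div_assoc, div_lt_one (by linarith)]; linarith⟩
  -- Deviations near `θ i` have per-state mass below `M`, where the discounted series defining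
  -- the occupancy converge uniformly.
  set U := {x : S → A i → ℝ | ∀ s, ∑ b, |x s b| < M}
  have hU : U ∈ 𝓝 (θ i) := Filter.eventually_all.2 fun s =>
    (by fun_prop : Continuous fun x : S → A i → ℝ => ∑ b, |x s b|).continuousAt.eventually_lt
      continuousAt_const (by rw [sum_abs_of_mem_stdSimplex (hθ i s)]; exact hM1)
  have hocc (s : S) :
      ContinuousAt (fun x => occupancy γ P (jointPi (Function.update θ i x)) ρ s) (θ i) :=
    (continuousOn_occupancy hP hγ (by linarith) hγM
      (fun s a => by simp only [jointPi_update]; fun_prop)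
      (fun x hx s => (sum_abs_jointPi_update hθ i x s).trans_le (hx s).le) ρ s).continuousAt hU
  have hsub : ∀ᶠ x in 𝓝 (θ i),
      Jtot γ P ρ (Function.update θ i x) f - Jtot γ P ρ (Function.update θ i (θ i)) f =
        weightedPairing (occupancy γ P (jointPi (Function.update θ i x)) ρ) (agentQ γ P θ f i)
          (x - θ i) := by
    filter_upwards [hU] with x hx
    rw [Function.update_eq_self, weightedPairing_apply,
      Jtot_update_sub_Jtot hP hγ hM1.le hγM hθ i (fun s => (hx s).le)]
    rfl
  simpa only [Function.update_eq_self] using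
    hasFDerivAt_of_eventually_sub_eq_apply (continuousAt_weightedPairing hocc _) hsub

end Game

theorem nash_equilibrium_iff_first_order_stationary_general
    {N : ℕ} {S : Type} {A : Fin N → Type}
    [Fintype S] [DecidableEq S]
    [∀ i, Fintype (A i)]
    (γ : ℝ) (hγ0 : 0 ≤ γ) (hγ1 : γ < 1)
    (P : S → (∀ i, A i) → S → ℝ) (hP : ∀ s a, P s a ∈ stdSimplex ℝ S)
    (r : Fin N → S → (∀ i, A i) → ℝ)
    (ρ : S → ℝ)
    -- Assumption 1 : d_θ(s) > 0 for all s and all feasible θ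
    (hA1 : ∀ ϑ : ∀ i, S → A i → ℝ, feasible ϑ → ∀ s : S, 0 < visit γ P ϑ ρ s)
    (θ : ∀ i, S → A i → ℝ) (hθ : feasible θ) :
    -- θ is a Nash equilibrium ↔ θ is a first-order stationary policy
    (∀ i : Fin N, ∀ θi' : S → A i → ℝ,
      (∀ s, θi' s ∈ stdSimplex ℝ (A i)) →
      Jtot γ P ρ (Function.update θ i θi') (r i) ≤ Jtot γ P ρ θ (r i))
    ↔
    (∀ i : Fin N, ∀ θi' : S → A i → ℝ,
      (∀ s, θi' s ∈ stdSimplex ℝ (A i)) →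
      fderiv ℝ (fun x : S → A i → ℝ =>
          Jtot γ P ρ (Function.update θ i x) (r i)) (θ i) (θi' - θ i) ≤ 0) := by
  have hocc (ϑ : ∀ i, S → A i → ℝ) (hϑ : feasible ϑ) (s : S) : 0 < occupancy γ P (jointPi ϑ) ρ s :=
    (pos_iff_pos_of_mul_pos (hA1 ϑ hϑ s)).1 (sub_pos.2 hγ1)
  constructor
  · intro hNE i θi' hθi'
    refine fderiv_apply_sub_nonpos_of_isMaxOn (convex_pi fun s _ => convex_stdSimplex ℝ (A i))
      (Set.mem_univ_pi.2 (hθ i)) (Set.mem_univ_pi.2 hθi') fun y hy => ?_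
    show _ ≤ Jtot γ P ρ (Function.update θ i (θ i)) (r i)
    rw [Function.update_eq_self]
    exact hNE i y (Set.mem_univ_pi.1 hy)
  · intro hstat i θi' hθi'
    have hgrad := (hasFDerivAt_Jtot_update hP hγ0 hγ1 hθ i ρ (r i)).fderiv
    have hlocal (s : S) : ∑ b, (θi' s b - θ i s b) * agentQ γ P θ (r i) i s b ≤ 0 :=
      nonpos_of_forall_weighted_sum_nonpos
        (F := fun s z => ∑ b, (z b - θ i s b) * agentQ γ P θ (r i) i s b)
        (hocc θ hθ) (hθ i) (by simp)
        (fun y hy => by simpa [hgrad, weightedPairing_apply] using hstat i y hy) (hθi' s)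
    rw [← sub_nonpos, Jtot_update_sub_Jtot hP hγ0 le_rfl (by linarith) hθ i
      (fun s => (sum_abs_of_mem_stdSimplex (hθi' s)).le)]
    exact Finset.sum_nonpos fun s _ =>
      mul_nonpos_of_nonneg_of_nonpos (hocc _ (feasible_update hθ i hθi') s).le (hlocal s)

/-- Under Assumption 1, a policy of a finite Markov game
under direct policy parameterization is a Nash equilibrium if and only if it
is a first-order stationary policy. -/
theorem nash_equilibrium_iff_first_order_stationary
    {N : ℕ} {S : Type} {A : Fin N → Type}
    [Fintype S] [DecidableEq S] [Nonempty S]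
    [∀ i, Fintype (A i)] [∀ i, Nonempty (A i)]
    (γ : ℝ) (hγ0 : 0 ≤ γ) (hγ1 : γ < 1)
    (P : S → (∀ i, A i) → S → ℝ) (hP : ∀ s a, P s a ∈ stdSimplex ℝ S)
    (r : Fin N → S → (∀ i, A i) → ℝ)
    (ρ : S → ℝ) (hρ : ρ ∈ stdSimplex ℝ S)
    -- Assumption 1 : d_θ(s) > 0 for all s and all feasible θ
    (hA1 : ∀ ϑ : ∀ i, S → A i → ℝ, feasible ϑ → ∀ s : S, 0 < visit γ P ϑ ρ s)
    (θ : ∀ i, S → A i → ℝ) (hθ : feasible θ) :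
    -- θ is a Nash equilibrium ↔ θ is a first-order stationary policy
    (∀ i : Fin N, ∀ θi' : S → A i → ℝ,
      (∀ s, θi' s ∈ stdSimplex ℝ (A i)) →
      Jtot γ P ρ (Function.update θ i θi') (r i) ≤ Jtot γ P ρ θ (r i))
    ↔
    (∀ i : Fin N, ∀ θi' : S → A i → ℝ,
      (∀ s, θi' s ∈ stdSimplex ℝ (A i)) →
      fderiv ℝ (fun x : S → A i → ℝ =>
          Jtot γ P ρ (Function.update θ i x) (r i)) (θ i) (θi' - θ i) ≤ 0) :=
  nash_equilibrium_iff_first_order_stationary_general γ hγ0 hγ1 P hP r ρ hA1 θ hθ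
end

section
/- (MPG construction from symmetric pairwise rewards) Consider a finite product-structured Markov game in which each agent i's reward is a sum of pairwise terms r_i(s_t, a_t) = Σ_{j∈N, j≠i} r_ij(s_{i,t}, s_{j,t}, a_{i,t}, a_{j,t}) with the symmetry r_ij(s_i, s_j, a_i, a_j) = r_ji(s_j, s_i, a_j, a_i) for all i ≠ j, the transition kernel factorizes as P(s'|s,a) = ∏_{i=1}^N P_i(s_i'|s_i,a_i), the initial state distribution is a product ρ = ρ_1 ⊗ ⋯ ⊗ ρ_N, and each agent uses a local policy π_{i,θ_i}(a_i|s_i). Then the game is a Markov potential game with potential function φ^joint(s_t, a_t) = Σ_{i∈N} Σ_{j∈N, j<i} r_ij(s_{i,t}, s_{j,t}, a_{i,t}, a_{j,t}); that is, for every agent i, every θ_i, θ_i' ∈ X_i, every θ_{-i}, and every initial state s, the difference in agent i's expected discounted reward under π_{(θ_i',θ_{-i})} versus π_{(θ_i,θ_{-i})} equals the corresponding difference in the expected discounted sum of φ^joint. -/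
open scoped BigOperators

/-! Common framework for finite *product-structured* Markov games.  Agents are
indexed by `Fin N`; agent `i` has local finite state space `S i` and finite
action space `A i`.  The global state space is `∀ i, S i`, the transition
kernel factorizes per agent, the initial distribution is a product, and each
agent uses a local directly parameterized policy `θ i : S i → A i → ℝ`. -/

section ProdMGDefs

variable {N : ℕ} {S A : Fin N → Type}
variable [∀ i, Fintype (S i)] [∀ i, Fintype (A i)]

/-- Joint policy `π_θ(a|s) = ∏ i, θ_i(a_i|s_i)` induced by the local
directly parameterized policies. -/
def jointPiL (θ : ∀ i, S i → A i → ℝ) : (∀ i, S i) → (∀ i, A i) → ℝ :=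
  fun s a => ∏ i, θ i (s i) (a i)

/-- Factorized transition kernel `P(s'|s,a) = ∏ i, P_i(s_i'|s_i,a_i)`. -/
def jointP (P : ∀ i, S i → A i → S i → ℝ) :
    (∀ i, S i) → (∀ i, A i) → (∀ i, S i) → ℝ :=
  fun s a s' => ∏ i, P i (s i) (a i) (s' i)

/-- Product initial state distribution `ρ = ρ_1 ⊗ ⋯ ⊗ ρ_N`. -/
def jointRho (ρ : ∀ i, S i → ℝ) : (∀ i, S i) → ℝ :=
  fun s => ∏ i, ρ i (s i)

/-- The feasible set of local policy profiles: each `θ i (s i)` lies in the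
probability simplex `Δ(A i)`. -/
def feasibleL (θ : ∀ i, S i → A i → ℝ) : Prop :=
  ∀ i, ∀ si, θ i si ∈ stdSimplex ℝ (A i)

end ProdMGDefs

/-! Splitting off the pairs that involve agent `i` and using the symmetry `r_ij = r_ji`, the
potential becomes `r_i + g`, where `g` only involves the other agents. Since kernel, policy and
initial distribution all factorize, the state-action distribution at each time is a product of
per-agent distributions; agent `i`'s factor sums to one whatever `θ_i` is, so the expectation of
`g` at each time does not depend on `θ_i`. Hence the potential and `r_i` change by the same
amount; the discounted sums converge because the rewards are bounded and `0 ≤ γ < 1`. -/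

open Finset Function

section Chain

variable {σ α : Type} [Fintype σ] [Fintype α] {P : σ → α → σ → ℝ} {π : σ → α → ℝ} {ρ : σ → ℝ}

lemma dirac_mem_stdSimplex [DecidableEq σ] (s : σ) : dirac s ∈ stdSimplex ℝ σ :=
  ⟨fun s' => by unfold dirac; positivity, by simp [dirac]⟩

lemma stateDist_mem_stdSimplex (hP : ∀ s a, P s a ∈ stdSimplex ℝ σ)
    (hπ : ∀ s, π s ∈ stdSimplex ℝ α) (hρ : ρ ∈ stdSimplex ℝ σ) (t : ℕ) :
    stateDist P π ρ t ∈ stdSimplex ℝ σ := by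
  induction t with
  | zero => exact hρ
  | succ t ih =>
    have h : stateDist P π ρ (t + 1) = ∑ s, stateDist P π ρ t s • ∑ a, π s a • P s a := by
      funext s'
      simp only [stateDist, Finset.sum_apply, Pi.smul_apply, smul_eq_mul, mul_sum, mul_assoc]
    rw [h]
    exact (convex_stdSimplex ℝ σ).sum_mem (fun s _ => ih.1 s) ih.2 fun s _ =>
      (convex_stdSimplex ℝ σ).sum_mem (fun a _ => (hπ s).1 a) (hπ s).2 fun a _ => hP s a

lemma abs_sum_sum_mul_le {d : σ → ℝ} (hd : d ∈ stdSimplex ℝ σ) (hπ : ∀ s, π s ∈ stdSimplex ℝ α)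
    (f : σ → α → ℝ) : |∑ s, ∑ a, d s * π s a * f s a| ≤ ∑ s, ∑ a, |f s a| := by
  refine (abs_sum_le_sum_abs _ _).trans <| sum_le_sum fun s _ =>
    (abs_sum_le_sum_abs _ _).trans <| sum_le_sum fun a _ => ?_
  obtain ⟨hd0, hd1⟩ := mem_Icc_of_mem_stdSimplex hd s
  obtain ⟨hπ0, hπ1⟩ := mem_Icc_of_mem_stdSimplex (hπ s) a
  rw [abs_mul, abs_mul, abs_of_nonneg hd0, abs_of_nonneg hπ0]
  exact mul_le_of_le_one_left (abs_nonneg _) (mul_le_one₀ hd1 hπ0 hπ1)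

lemma summable_expDisc {γ : ℝ} (hγ0 : 0 ≤ γ) (hγ1 : γ < 1) (hP : ∀ s a, P s a ∈ stdSimplex ℝ σ)
    (hπ : ∀ s, π s ∈ stdSimplex ℝ α) (hρ : ρ ∈ stdSimplex ℝ σ) (f : σ → α → ℝ) :
    Summable fun t => γ ^ t * ∑ s, ∑ a, stateDist P π ρ t s * π s a * f s a := by
  refine .of_norm_bounded ((summable_geometric_of_lt_one hγ0 hγ1).mul_left
    (∑ s, ∑ a, |f s a|)) fun t => ?_
  rw [Real.norm_eq_abs, abs_mul, abs_pow, abs_of_nonneg hγ0, mul_comm]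
  exact mul_le_mul_of_nonneg_right
    (abs_sum_sum_mul_le (stateDist_mem_stdSimplex hP hπ hρ t) hπ f) (pow_nonneg hγ0 t)

lemma expDisc_add {γ : ℝ} (hγ0 : 0 ≤ γ) (hγ1 : γ < 1) (hP : ∀ s a, P s a ∈ stdSimplex ℝ σ)
    (hπ : ∀ s, π s ∈ stdSimplex ℝ α) (hρ : ρ ∈ stdSimplex ℝ σ) (f g : σ → α → ℝ) :
    expDisc γ P π ρ (f + g) = expDisc γ P π ρ f + expDisc γ P π ρ g := by
  rw [expDisc, expDisc, expDisc, ← (summable_expDisc hγ0 hγ1 hP hπ hρ f).tsum_add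
    (summable_expDisc hγ0 hγ1 hP hπ hρ g)]
  congr! 2 with t
  simp only [Pi.add_apply, mul_add, sum_add_distrib]

lemma stateActionDist_mem_stdSimplex {d : σ → ℝ} (hd : d ∈ stdSimplex ℝ σ)
    (hπ : ∀ s, π s ∈ stdSimplex ℝ α) :
    (fun p : σ × α => d p.1 * π p.1 p.2) ∈ stdSimplex ℝ (σ × α) := by
  refine ⟨fun p => mul_nonneg (hd.1 _) ((hπ _).1 _), ?_⟩
  simp only [Fintype.sum_prod_type, ← mul_sum, (hπ _).2, mul_one, hd.2]

end Chain

section Product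

variable {ι : Type*} [Fintype ι] [DecidableEq ι] {B : ι → Type*} [∀ j, Fintype (B j)]

lemma prod_mem_stdSimplex {p : ∀ j, B j → ℝ} (hp : ∀ j, p j ∈ stdSimplex ℝ (B j)) :
    (fun x : ∀ j, B j => ∏ j, p j (x j)) ∈ stdSimplex ℝ (∀ j, B j) :=
  ⟨fun x => prod_nonneg fun j _ => (hp j).1 _, by
    rw [← Fintype.prod_sum]; exact prod_eq_one fun j _ => (hp j).2⟩

lemma sum_prod_mul_comp_subtype_ne (i : ι) (f : ∀ j, B j → ℝ)
    (h : (∀ j : {j // j ≠ i}, B j) → ℝ) :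
    ∑ w : ∀ j, B j, (∏ j, f j (w j)) * h (fun j => w j)
      = (∑ x, f i x) * ∑ q, (∏ j : {j // j ≠ i}, f j (q j)) * h q := by
  rw [← (Equiv.piSplitAt i B).symm.sum_comp, Fintype.sum_prod_type, sum_mul]
  refine sum_congr rfl fun x _ => ?_
  rw [mul_sum]
  refine sum_congr rfl fun q _ => ?_
  have hne : ∀ j : {j // j ≠ i}, (j : ι) ≠ i := fun j => j.2
  simp [Fintype.prod_eq_mul_prod_subtype_ne _ i, hne, mul_assoc]

lemma sum_prod_mul_eq_of_update_invariant (i : ι) {f f' : ∀ j, B j → ℝ}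
    (hf : ∀ j, j ≠ i → f j = f' j) (hi : ∑ x, f i x = ∑ x, f' i x)
    {g : (∀ j, B j) → ℝ} (hg : ∀ w x, g (update w i x) = g w) :
    ∑ w, (∏ j, f j (w j)) * g w = ∑ w, (∏ j, f' j (w j)) * g w := by
  rcases isEmpty_or_nonempty (B i) with hB | ⟨⟨x₀⟩⟩
  · have : IsEmpty (∀ j, B j) := ⟨fun w => hB.false (w i)⟩
    simp
  set h : (∀ j : {j // j ≠ i}, B j) → ℝ := fun q => g ((Equiv.piSplitAt i B).symm (x₀, q))
  have hg_restrict : ∀ w, g w = h (fun j => w j) := fun w => by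
    rw [← hg w x₀]; congr 1
  simp only [hg_restrict, sum_prod_mul_comp_subtype_ne i, hi]
  refine congrArg _ (sum_congr rfl fun q _ => ?_)
  rw [prod_congr rfl fun j _ => by rw [hf j j.2]]

end Product

lemma dirac_eq_jointRho {N : ℕ} {S : Fin N → Type} [∀ i, DecidableEq (S i)] (s : ∀ i, S i) :
    dirac s = jointRho fun i => dirac (s i) := by
  funext s'
  simp only [dirac, jointRho, prod_boole, mem_univ, true_implies, funext_iff]

section ProductGame

variable {N : ℕ} {S A : Fin N → Type}

lemma jointP_mem_stdSimplex [∀ i, Fintype (S i)] {P : ∀ i, S i → A i → S i → ℝ}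
    (hP : ∀ i si ai, P i si ai ∈ stdSimplex ℝ (S i)) (s : ∀ i, S i) (a : ∀ i, A i) :
    jointP P s a ∈ stdSimplex ℝ (∀ i, S i) :=
  prod_mem_stdSimplex fun i => hP i (s i) (a i)

lemma jointRho_mem_stdSimplex [∀ i, Fintype (S i)] {ρ : ∀ i, S i → ℝ}
    (hρ : ∀ i, ρ i ∈ stdSimplex ℝ (S i)) : jointRho ρ ∈ stdSimplex ℝ (∀ i, S i) :=
  prod_mem_stdSimplex hρ

lemma jointPiL_mem_stdSimplex [∀ i, Fintype (A i)] {θ : ∀ i, S i → A i → ℝ} (hθ : feasibleL θ)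
    (s : ∀ i, S i) :
    jointPiL θ s ∈ stdSimplex ℝ (∀ i, A i) :=
  prod_mem_stdSimplex fun i => hθ i (s i)

lemma feasibleL_update [∀ i, Fintype (A i)] {θ : ∀ i, S i → A i → ℝ} (hθ : feasibleL θ)
    {i : Fin N} {θi' : S i → A i → ℝ} (hθi' : ∀ si, θi' si ∈ stdSimplex ℝ (A i)) :
    feasibleL (update θ i θi') := fun j => by
  rcases eq_or_ne j i with rfl | hj
  · simpa using hθi'
  · simpa [update_of_ne hj] using hθ j

variable [∀ i, Fintype (S i)] [∀ i, Fintype (A i)]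

lemma stateDist_jointP (P : ∀ i, S i → A i → S i → ℝ) (θ : ∀ i, S i → A i → ℝ)
    (ρ : ∀ i, S i → ℝ) (t : ℕ) (s : ∀ i, S i) :
    stateDist (jointP P) (jointPiL θ) (jointRho ρ) t s
      = ∏ i, stateDist (P i) (θ i) (ρ i) t (s i) := by
  induction t generalizing s with
  | zero => rfl
  | succ t ih =>
    simp only [stateDist, ih, jointPiL, jointP, ← prod_mul_distrib, Fintype.prod_sum]

lemma sum_stateDist_jointP_eq_sum_pi (P : ∀ i, S i → A i → S i → ℝ)
    (θ : ∀ i, S i → A i → ℝ) (ρ : ∀ i, S i → ℝ) (t : ℕ) (g : (∀ i, S i) → (∀ i, A i) → ℝ) :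
    ∑ s, ∑ a, stateDist (jointP P) (jointPiL θ) (jointRho ρ) t s * jointPiL θ s a * g s a
      = ∑ w : ∀ i, S i × A i,
          (∏ i, stateDist (P i) (θ i) (ρ i) t (w i).1 * θ i (w i).1 (w i).2)
            * g (fun i => (w i).1) (fun i => (w i).2) := by
  rw [← (Equiv.arrowProdEquivProdArrow _ S A).symm.sum_comp, Fintype.sum_prod_type]
  simp [stateDist_jointP, jointPiL, prod_mul_distrib]

lemma expDisc_update_eq_of_update_invariant {γ : ℝ} {P : ∀ i, S i → A i → S i → ℝ}
    (hP : ∀ i si ai, P i si ai ∈ stdSimplex ℝ (S i)) {ρ : ∀ i, S i → ℝ}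
    (hρ : ∀ i, ρ i ∈ stdSimplex ℝ (S i)) {θ : ∀ i, S i → A i → ℝ} (hθ : feasibleL θ) {i : Fin N}
    {θi' : S i → A i → ℝ} (hθi' : ∀ si, θi' si ∈ stdSimplex ℝ (A i))
    {g : (∀ i, S i) → (∀ i, A i) → ℝ}
    (hg : ∀ s a x y, g (update s i x) (update a i y) = g s a) :
    expDisc γ (jointP P) (jointPiL (update θ i θi')) (jointRho ρ) g
      = expDisc γ (jointP P) (jointPiL θ) (jointRho ρ) g := by
  have hsum : ∀ η : S i → A i → ℝ, (∀ si, η si ∈ stdSimplex ℝ (A i)) → ∀ t,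
      ∑ p : S i × A i, stateDist (P i) η (ρ i) t p.1 * η p.1 p.2 = 1 := fun η hη t =>
    (stateActionDist_mem_stdSimplex (stateDist_mem_stdSimplex (hP i) hη (hρ i) t) hη).2
  refine tsum_congr fun t => congrArg _ ?_
  rw [sum_stateDist_jointP_eq_sum_pi, sum_stateDist_jointP_eq_sum_pi]
  refine sum_prod_mul_eq_of_update_invariant (B := fun j => S j × A j) i
    (f := fun j p => stateDist (P j) (update θ i θi' j) (ρ j) t p.1 * update θ i θi' j p.1 p.2)
    (f' := fun j p => stateDist (P j) (θ j) (ρ j) t p.1 * θ j p.1 p.2)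
    (fun j hj => by simp only [update_of_ne hj]) ?_ fun w p => ?_
  · simp only [update_self, hsum θi' hθi', hsum (θ i) (hθ i)]
  · simp only [apply_update (fun _ => Prod.fst) w, apply_update (fun _ => Prod.snd) w, hg]

end ProductGame

lemma sum_sum_lt_eq_sum_erase_add {ι : Type*} [Fintype ι] [LinearOrder ι] (i : ι)
    (h : ι → ι → ℝ) (hsymm : ∀ k j, k ≠ j → h k j = h j k) :
    ∑ k, ∑ j ∈ univ.filter (· < k), h k j
      = ∑ j ∈ univ.erase i, h i j
        + ∑ k ∈ univ.erase i, ∑ j ∈ (univ.filter (· < k)).erase i, h k j := by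
  have inner : ∀ k, ∑ j ∈ univ.filter (· < k), h k j
      = (if i < k then h i k else 0) + ∑ j ∈ (univ.filter (· < k)).erase i, h k j := by
    intro k
    split_ifs with hik
    · rw [← add_sum_erase _ _ (by simpa using hik), hsymm k i hik.ne']
    · rw [erase_eq_of_notMem (by simpa using hik), zero_add]
  have below : (univ.filter (· < i)).erase i = univ.filter (· < i) :=
    erase_eq_of_notMem (by simp)
  have split : ∑ j ∈ univ.erase i, h i j
      = ∑ k, (if i < k then h i k else 0) + ∑ j ∈ univ.filter (· < i), h i j := by
    rw [← sum_filter, ← sum_union]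
    · congr 1; ext j; simp only [mem_union, mem_filter, mem_univ, true_and, mem_erase, and_true]
      exact ne_iff_lt_or_gt.trans or_comm
    · exact disjoint_filter.2 fun j _ h1 h2 => lt_asymm h1 h2
  rw [sum_congr rfl fun k _ => inner k, sum_add_distrib, split,
    ← add_sum_erase univ (fun k => ∑ j ∈ (univ.filter (· < k)).erase i, h k j) (mem_univ i), below]
  ring

theorem mpg_construction_from_pairwise_rewards_general
    {N : ℕ} {S A : Fin N → Type}
    [∀ i, Fintype (S i)] [∀ i, DecidableEq (S i)] [∀ i, Fintype (A i)]
    (γ : ℝ) (hγ0 : 0 ≤ γ) (hγ1 : γ < 1)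
    (P : ∀ i, S i → A i → S i → ℝ)
    (hP : ∀ i si ai, P i si ai ∈ stdSimplex ℝ (S i))
    (rpair : ∀ i j : Fin N, S i → S j → A i → A j → ℝ)
    -- symmetry of the pairwise rewards:
    (hsym : ∀ i j : Fin N, i ≠ j → ∀ si sj ai aj,
      rpair i j si sj ai aj = rpair j i sj si aj ai) :
    ∀ i : Fin N, ∀ θ : ∀ j, S j → A j → ℝ, feasibleL θ →
      ∀ θi' : S i → A i → ℝ, (∀ si, θi' si ∈ stdSimplex ℝ (A i)) →
        ∀ s : ∀ j, S j,
          expDisc γ (jointP P) (jointPiL (Function.update θ i θi')) (dirac s)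
              (fun st b => ∑ j ∈ Finset.univ.erase i,
                rpair i j (st i) (st j) (b i) (b j))
            - expDisc γ (jointP P) (jointPiL θ) (dirac s)
              (fun st b => ∑ j ∈ Finset.univ.erase i,
                rpair i j (st i) (st j) (b i) (b j))
          = expDisc γ (jointP P) (jointPiL (Function.update θ i θi')) (dirac s)
              (fun st b => ∑ k, ∑ j ∈ Finset.univ.filter (fun j => j < k),
                rpair k j (st k) (st j) (b k) (b j))
            - expDisc γ (jointP P) (jointPiL θ) (dirac s)
              (fun st b => ∑ k, ∑ j ∈ Finset.univ.filter (fun j => j < k),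
                rpair k j (st k) (st j) (b k) (b j)) := by
  intro i θ hθ θi' hθi' s
  set r : (∀ j, S j) → (∀ j, A j) → ℝ := fun st b => ∑ j ∈ univ.erase i,
    rpair i j (st i) (st j) (b i) (b j)
  set rest : (∀ j, S j) → (∀ j, A j) → ℝ := fun st b => ∑ k ∈ univ.erase i,
    ∑ j ∈ (univ.filter (· < k)).erase i, rpair k j (st k) (st j) (b k) (b j)
  have hpotential : (fun st b => ∑ k, ∑ j ∈ univ.filter (· < k),
      rpair k j (st k) (st j) (b k) (b j)) = r + rest := by
    funext st b
    exact sum_sum_lt_eq_sum_erase_add i _ fun k j hkj => hsym k j hkj _ _ _ _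
  have hrest : ∀ st b x y, rest (update st i x) (update b i y) = rest st b := fun st b x y =>
    sum_congr rfl fun k hk => sum_congr rfl fun j hj => by
      simp only [update_of_ne (ne_of_mem_erase hk), update_of_ne (ne_of_mem_erase hj)]
  have hρ : ∀ j, dirac (s j) ∈ stdSimplex ℝ (S j) := fun j => dirac_mem_stdSimplex (s j)
  have hjP := jointP_mem_stdSimplex hP
  rw [hpotential, dirac_eq_jointRho,
    expDisc_add hγ0 hγ1 hjP (jointPiL_mem_stdSimplex (feasibleL_update hθ hθi'))
      (jointRho_mem_stdSimplex hρ),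
    expDisc_add hγ0 hγ1 hjP (jointPiL_mem_stdSimplex hθ) (jointRho_mem_stdSimplex hρ),
    expDisc_update_eq_of_update_invariant hP hρ hθ hθi' hrest]
  ring

/-- **MPG construction from symmetric pairwise rewards.** In a
finite product-structured Markov game where each agent's reward is a sum of
symmetric pairwise terms `r_i = ∑_{j ≠ i} r_ij(s_i, s_j, a_i, a_j)` with
`r_ij(s_i,s_j,a_i,a_j) = r_ji(s_j,s_i,a_j,a_i)`, the game is a Markov
potential game with potential `φ^joint(s,a) = ∑ i, ∑_{j < i} r_ij`. -/
theorem mpg_construction_from_pairwise_rewards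
    {N : ℕ} {S A : Fin N → Type}
    [∀ i, Fintype (S i)] [∀ i, DecidableEq (S i)] [∀ i, Fintype (A i)]
    [∀ i, Nonempty (S i)] [∀ i, Nonempty (A i)]
    (γ : ℝ) (hγ0 : 0 ≤ γ) (hγ1 : γ < 1)
    (P : ∀ i, S i → A i → S i → ℝ)
    (hP : ∀ i si ai, P i si ai ∈ stdSimplex ℝ (S i))
    (ρ : ∀ i, S i → ℝ) (hρ : ∀ i, ρ i ∈ stdSimplex ℝ (S i))
    (rpair : ∀ i j : Fin N, S i → S j → A i → A j → ℝ)
    -- symmetry of the pairwise rewards: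
    (hsym : ∀ i j : Fin N, i ≠ j → ∀ si sj ai aj,
      rpair i j si sj ai aj = rpair j i sj si aj ai) :
    ∀ i : Fin N, ∀ θ : ∀ j, S j → A j → ℝ, feasibleL θ →
      ∀ θi' : S i → A i → ℝ, (∀ si, θi' si ∈ stdSimplex ℝ (A i)) →
        ∀ s : ∀ j, S j,
          expDisc γ (jointP P) (jointPiL (Function.update θ i θi')) (dirac s)
              (fun st b => ∑ j ∈ Finset.univ.erase i,
                rpair i j (st i) (st j) (b i) (b j))
            - expDisc γ (jointP P) (jointPiL θ) (dirac s)
              (fun st b => ∑ j ∈ Finset.univ.erase i,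
                rpair i j (st i) (st j) (b i) (b j))
          = expDisc γ (jointP P) (jointPiL (Function.update θ i θi')) (dirac s)
              (fun st b => ∑ k, ∑ j ∈ Finset.univ.filter (fun j => j < k),
                rpair k j (st k) (st j) (b k) (b j))
            - expDisc γ (jointP P) (jointPiL θ) (dirac s)
              (fun st b => ∑ k, ∑ j ∈ Finset.univ.filter (fun j => j < k),
                rpair k j (st k) (st j) (b k) (b j)) :=
  mpg_construction_from_pairwise_rewards_general γ hγ0 hγ1 P hP rpair hsym
end
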